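/- (Lemma 4, frequency-asynchronous case, both directions.) For positive integers L, M, Q with Q ≥ L ≥ 6 and M ≥ 1, and Ω ∈ (0, π], define S(Ω) = 2·⌊QΩ/(2π)⌋ + 1 if Ω ≠ π and S(Ω) = 2·⌊Q/2⌋ if Ω = π, and define F₂(Ω) = S(Ω)·(8L² + 8LM + 10L + 6M − 5) and F₃ = 90L² + 16LM + 6L + 15Q·log₂Q. Then: (i) if Ω < (39L + 3M)π/(Q(6L + 5M)), then F₂(Ω) < F₃; and (ii) if Ω > (120L + 20L·log₂L + 24M + 16Q·log₂Q)·π/(8Q(L + M)), then F₂(Ω) > F₃. -/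
import Mathlib

set_option maxHeartbeats 1000000 in
theorem stmt_17 (L M Q : ℕ) (hL : 6 ≤ L) (hLQ : L ≤ Q) (hM : 1 ≤ M)
    (Ω : ℝ) (hΩ : Ω ∈ Set.Ioc 0 Real.pi) :
    let S : ℝ :=
      if Ω ≠ Real.pi then 2 * (⌊(Q : ℝ) * Ω / (2 * Real.pi)⌋ : ℝ) + 1
      else 2 * (⌊(Q : ℝ) / 2⌋ : ℝ)
    let F2 : ℝ := S * (8 * (L : ℝ) ^ 2 + 8 * (L : ℝ) * (M : ℝ) + 10 * (L : ℝ) + 6 * (M : ℝ) - 5)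
    let F3 : ℝ := 90 * (L : ℝ) ^ 2 + 16 * (L : ℝ) * (M : ℝ) + 6 * (L : ℝ) +
      15 * (Q : ℝ) * Real.logb 2 (Q : ℝ)
    (Ω < (39 * (L : ℝ) + 3 * (M : ℝ)) * Real.pi / ((Q : ℝ) * (6 * (L : ℝ) + 5 * (M : ℝ))) →
      F2 < F3) ∧
    (Ω > (120 * (L : ℝ) + 20 * (L : ℝ) * Real.logb 2 (L : ℝ) + 24 * (M : ℝ) +
          16 * (Q : ℝ) * Real.logb 2 (Q : ℝ)) * Real.pi / (8 * (Q : ℝ) * ((L : ℝ) + (M : ℝ))) →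
      F2 > F3) := by
  obtain ⟨hΩ0, hΩπ⟩ := hΩ
  intro S F2 F3
  simp only [F2, F3, S]
  clear F2 F3 S
  have hl6 : (6:ℝ) ≤ (L:ℝ) := by exact_mod_cast hL
  have hlq : (L:ℝ) ≤ (Q:ℝ) := by exact_mod_cast hLQ
  have hm1 : (1:ℝ) ≤ (M:ℝ) := by exact_mod_cast hM
  have hq6 : (6:ℝ) ≤ (Q:ℝ) := le_trans hl6 hlq
  have hπ := Real.pi_pos
  have hu : 0 ≤ (Q:ℝ) * Real.logb 2 (Q:ℝ) :=
    mul_nonneg (by linarith) (Real.logb_nonneg one_lt_two (by linarith))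
  have ht : 0 ≤ Real.logb 2 (L:ℝ) := Real.logb_nonneg one_lt_two (by linarith)
  have hC : 0 < 8*(L:ℝ)^2+8*(L:ℝ)*(M:ℝ)+10*(L:ℝ)+6*(M:ℝ)-5 := by nlinarith
  constructor
  · intro hlt
    have hD : (0:ℝ) < (Q:ℝ)*(6*(L:ℝ)+5*(M:ℝ)) := by nlinarith
    have hne : Ω ≠ Real.pi := by
      intro h
      rw [h, lt_div_iff₀ hD] at hlt
      have h5 : (Q:ℝ)*(6*(L:ℝ)+5*(M:ℝ)) < 39*(L:ℝ)+3*(M:ℝ) := by nlinarith [hlt, hπ]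
      nlinarith [h5, mul_nonneg (by linarith : (0:ℝ) ≤ (Q:ℝ)-(L:ℝ)) (by linarith : (0:ℝ) ≤ 6*(L:ℝ)+5*(M:ℝ)),
        mul_nonneg (by linarith : (0:ℝ) ≤ (L:ℝ)) (by linarith : (0:ℝ) ≤ (M:ℝ)-1),
        mul_nonneg (by linarith : (0:ℝ) ≤ (M:ℝ)) (by linarith : (0:ℝ) ≤ 2*(L:ℝ)-3),
        mul_nonneg (by linarith : (0:ℝ) ≤ (L:ℝ)) (by linarith : (0:ℝ) ≤ (L:ℝ)-6)]
    rw [if_pos hne]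
    rw [lt_div_iff₀ hD] at hlt
    set x : ℝ := (Q:ℝ) * Ω / (2*Real.pi) with hxdef
    have hfloor : ((⌊x⌋:ℝ)) ≤ x := Int.floor_le x
    have hxval : x * (2*Real.pi) = (Q:ℝ)*Ω := by
      rw [hxdef]; field_simp
    have hD2 : (0:ℝ) < 6*(L:ℝ)+5*(M:ℝ) := by linarith
    have h4 : x*(2*Real.pi)*(6*(L:ℝ)+5*(M:ℝ)) < (39*(L:ℝ)+3*(M:ℝ))*Real.pi := by
      rw [hxval]; linarith [hlt]
    have h2 : 2*x*(6*(L:ℝ)+5*(M:ℝ)) < 39*(L:ℝ)+3*(M:ℝ) := by nlinarith [h4, hπ]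
    have hS : (2*(⌊x⌋:ℝ)+1) * (6*(L:ℝ)+5*(M:ℝ)) < 45*(L:ℝ)+8*(M:ℝ) := by nlinarith [hfloor, hD2]
    have hpoly : (45*(L:ℝ)+8*(M:ℝ)) * (8*(L:ℝ)^2+8*(L:ℝ)*(M:ℝ)+10*(L:ℝ)+6*(M:ℝ)-5)
        < (6*(L:ℝ)+5*(M:ℝ)) * (90*(L:ℝ)^2+16*(L:ℝ)*(M:ℝ)+6*(L:ℝ)+15*(Q:ℝ)*Real.logb 2 (Q:ℝ)) := by
      nlinarith [mul_nonneg (mul_nonneg (by linarith : (0:ℝ) ≤ (L:ℝ)-6) (by linarith : (0:ℝ) ≤ (L:ℝ))) (by linarith : (0:ℝ) ≤ (L:ℝ)),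
        mul_nonneg (mul_nonneg (by linarith : (0:ℝ) ≤ (L:ℝ)-6) (by linarith : (0:ℝ) ≤ (L:ℝ))) (by linarith : (0:ℝ) ≤ (M:ℝ)),
        mul_nonneg (mul_nonneg (by linarith : (0:ℝ) ≤ (L:ℝ)-6) (by linarith : (0:ℝ) ≤ (M:ℝ))) (by linarith : (0:ℝ) ≤ (M:ℝ)),
        mul_nonneg (by linarith : (0:ℝ) ≤ (M:ℝ)-1) (by linarith : (0:ℝ) ≤ (L:ℝ)),
        mul_nonneg (le_of_lt hD2) hu]
    nlinarith [hS, hC, hpoly, hD2]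
  · intro hgt
    have hDq : (0:ℝ) < 8*(Q:ℝ)*((L:ℝ)+(M:ℝ)) := by nlinarith
    rw [gt_iff_lt, div_lt_iff₀ hDq] at hgt
    -- hgt : A * π < Ω * (8Q(L+M))
    have key : (Q:ℝ)*Ω - Real.pi ≤
        (if Ω ≠ Real.pi then 2 * (⌊(Q : ℝ) * Ω / (2 * Real.pi)⌋ : ℝ) + 1
         else 2 * (⌊(Q : ℝ) / 2⌋ : ℝ)) * Real.pi := by
      by_cases hne : Ω ≠ Real.pi
      · rw [if_pos hne]
        set x : ℝ := (Q:ℝ) * Ω / (2*Real.pi) with hxdef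
        have hfl : x < (⌊x⌋:ℝ) + 1 := Int.lt_floor_add_one x
        have hxval : x * (2*Real.pi) = (Q:ℝ)*Ω := by rw [hxdef]; field_simp
        nlinarith [hfl, hπ, hxval]
      · rw [if_neg hne]
        push_neg at hne
        have hk : ((Q:ℝ)-1)/2 ≤ ((⌊(Q:ℝ)/2⌋:ℤ):ℝ) := by
          have h1 : (Q:ℝ)/2 - 1 < ((⌊(Q:ℝ)/2⌋:ℤ):ℝ) := Int.sub_one_lt_floor _
          have h2 : (Q:ℤ) - 2 < 2 * ⌊(Q:ℝ)/2⌋ := by exact_mod_cast (by linarith : (Q:ℝ) - 2 < 2*((⌊(Q:ℝ)/2⌋:ℤ):ℝ))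
          have h3 : (Q:ℤ) - 1 ≤ 2 * ⌊(Q:ℝ)/2⌋ := by omega
          have h4 : (Q:ℝ) - 1 ≤ 2*((⌊(Q:ℝ)/2⌋:ℤ):ℝ) := by exact_mod_cast h3
          linarith
        rw [hne]
        nlinarith [hk, hπ]
    have hLM : (0:ℝ) < 8*((L:ℝ)+(M:ℝ)) := by linarith
    -- 8(L+M) * S > A - 8(L+M)
    set Sv : ℝ := (if Ω ≠ Real.pi then 2 * (⌊(Q : ℝ) * Ω / (2 * Real.pi)⌋ : ℝ) + 1
         else 2 * (⌊(Q : ℝ) / 2⌋ : ℝ)) with hSdef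
    have hstep : (120 * (L : ℝ) + 20 * (L : ℝ) * Real.logb 2 (L : ℝ) + 24 * (M : ℝ) +
          16 * (Q : ℝ) * Real.logb 2 (Q : ℝ) - 8*((L:ℝ)+(M:ℝ))) * Real.pi
          < 8*((L:ℝ)+(M:ℝ)) * Sv * Real.pi := by
      nlinarith [key, hgt, hLM, hπ]
    have hstep2 : 120 * (L : ℝ) + 20 * (L : ℝ) * Real.logb 2 (L : ℝ) + 24 * (M : ℝ) +
          16 * (Q : ℝ) * Real.logb 2 (Q : ℝ) - 8*((L:ℝ)+(M:ℝ)) < 8*((L:ℝ)+(M:ℝ)) * Sv := by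
      nlinarith [hstep, hπ]
    have hpoly2 : 8*((L:ℝ)+(M:ℝ)) * (90*(L:ℝ)^2+16*(L:ℝ)*(M:ℝ)+6*(L:ℝ)+15*(Q:ℝ)*Real.logb 2 (Q:ℝ))
        ≤ (120 * (L : ℝ) + 20 * (L : ℝ) * Real.logb 2 (L : ℝ) + 24 * (M : ℝ) +
          16 * (Q : ℝ) * Real.logb 2 (Q : ℝ) - 8*((L:ℝ)+(M:ℝ)))
          * (8*(L:ℝ)^2+8*(L:ℝ)*(M:ℝ)+10*(L:ℝ)+6*(M:ℝ)-5) := by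
      have hP1 : 0 ≤ Real.logb 2 (L:ℝ) * (160*(L:ℝ)^3+160*(L:ℝ)^2*(M:ℝ)+200*(L:ℝ)^2+120*(L:ℝ)*(M:ℝ)-100*(L:ℝ)) := by
        apply mul_nonneg ht; nlinarith
      have hP2 : 0 ≤ ((Q:ℝ)*Real.logb 2 (Q:ℝ)) * (128*(L:ℝ)^2+128*(L:ℝ)*(M:ℝ)+40*(L:ℝ)-24*(M:ℝ)-80) := by
        apply mul_nonneg hu; nlinarith [mul_nonneg (by linarith : (0:ℝ) ≤ (L:ℝ)-6) (by linarith : (0:ℝ) ≤ (M:ℝ))]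
      nlinarith [hP1, hP2, mul_nonneg (mul_nonneg (by linarith : (0:ℝ) ≤ (L:ℝ)-6) (by linarith : (0:ℝ) ≤ (L:ℝ))) (by linarith : (0:ℝ) ≤ (L:ℝ)),
        mul_nonneg (mul_nonneg (by linarith : (0:ℝ) ≤ (L:ℝ)-6) (by linarith : (0:ℝ) ≤ (L:ℝ))) (by linarith : (0:ℝ) ≤ (M:ℝ)),
        mul_nonneg (by linarith : (0:ℝ) ≤ (M:ℝ)-1) (by linarith : (0:ℝ) ≤ (M:ℝ)),
        mul_nonneg (by linarith : (0:ℝ) ≤ (M:ℝ)-1) (by linarith : (0:ℝ) ≤ (L:ℝ))]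
    nlinarith [hstep2, hpoly2, hC, hLM]
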